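/- Let A, B, C be n×n complex matrices with A Hermitian and B skew-Hermitian. Let f_1 ≥ ... ≥ f_n be the eigenvalues of (C+C*)/2 and g_1 ≥ ... ≥ g_n the eigenvalues of −i(C−C*)/2, with corresponding unitary diagonalizations U, V as in the setup. Let a_1 ≥ ... ≥ a_n be the eigenvalues of A and b_1 ≥ ... ≥ b_n the eigenvalues of −iB, and set A_1 = diag(a_1,...,a_n), B_1 = i·diag(b_1,...,b_n). Then for any unitary matrices X, Y: ‖U*A_1U + V*B_1V − C‖ ≤ ‖X*AX + Y*BY − C‖ in the Frobenius norm. -/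

import Mathlib

/-!
Write `C = H + iK` with `H = ℜ C`, `K = ℑ C` Hermitian. For Hermitian `P, Q` the Frobenius norm
splits as `‖(P - H) + i(Q - K)‖² = ‖P - H‖² + ‖Q - K‖²`, so the problem decouples into two
Hoffman–Wielandt problems. For unitary `M`, `‖Mᴴ diag(a) M - diag(f)‖² = ∑ aᵢ² + ∑ fᵢ² -
2 ∑ᵢⱼ |Mᵢⱼ|² aᵢ fⱼ`; the matrix `(|Mᵢⱼ|²)` is doubly stochastic, so by Birkhoff's theorem the cross
term is maximised at a permutation matrix, and by the rearrangement inequality at the identity.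
This gives `‖X*AX - H‖² ≥ ∑ (aᵢ - fᵢ)²`, with equality for `X*AX = U* diag(a) U`.
-/

open Matrix

/-- Frobenius norm of a complex matrix. -/
noncomputable def frob {n : ℕ} (X : Matrix (Fin n) (Fin n) ℂ) : ℝ :=
  Real.sqrt (Matrix.trace (Xᴴ * X)).re

open ComplexStarModule

lemma isHermitian_conjTranspose_mul_diagonal_mul {ι : Type*} [Fintype ι] [DecidableEq ι]
    (P : Matrix ι ι ℂ) (v : ι → ℝ) : (Pᴴ * diagonal (fun i => (v i : ℂ)) * P).IsHermitian :=
  isHermitian_conjTranspose_mul_mul P <| isHermitian_diagonal_iff.2 fun _ => Complex.conj_ofReal _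

lemma realPart_eq_half_smul_add_conjTranspose {ι : Type*} (C : Matrix ι ι ℂ) :
    (ℜ C : Matrix ι ι ℂ) = (1 / 2 : ℂ) • (C + Cᴴ) := by
  rw [realPart_apply_coe, star_eq_conjTranspose, ← Complex.coe_smul]
  module

lemma imaginaryPart_eq_smul_sub_conjTranspose {ι : Type*} (C : Matrix ι ι ℂ) :
    (ℑ C : Matrix ι ι ℂ) = (-Complex.I / 2 : ℂ) • (C - Cᴴ) := by
  rw [imaginaryPart_apply_coe, star_eq_conjTranspose, ← Complex.coe_smul, smul_smul]
  module

section

variable {ι : Type*} [Fintype ι]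

noncomputable def frobSq (X : Matrix ι ι ℂ) : ℝ := (trace (Xᴴ * X)).re

lemma frobSq_sub (P Q : Matrix ι ι ℂ) :
    frobSq (P - Q) = frobSq P + frobSq Q - 2 * (trace (Pᴴ * Q)).re := by
  have hQP : trace (Qᴴ * P) = star (trace (Pᴴ * Q)) := by
    rw [← trace_conjTranspose, conjTranspose_mul, conjTranspose_conjTranspose]
  simp only [frobSq, conjTranspose_sub, sub_mul, mul_sub, trace_sub, Complex.sub_re, hQP,
    Complex.star_def, Complex.conj_re]
  ring

lemma frobSq_add_I_smul {M N : Matrix ι ι ℂ} (hM : M.IsHermitian) (hN : N.IsHermitian) :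
    frobSq (M + Complex.I • N) = frobSq M + frobSq N := by
  have hMN : trace (M * N) = trace (N * M) := trace_mul_comm M N
  simp only [frobSq, conjTranspose_add, conjTranspose_smul, hM.eq, hN.eq, add_mul, mul_add,
    smul_mul_assoc, mul_smul_comm, trace_add, trace_smul, hMN, Complex.star_def,
    Complex.conj_I, smul_eq_mul, Complex.add_re]
  simp [Complex.mul_re]

lemma frobSq_add_I_smul_sub {P Q : Matrix ι ι ℂ} (hP : P.IsHermitian) (hQ : Q.IsHermitian)
    (C : Matrix ι ι ℂ) :
    frobSq (P + Complex.I • Q - C) =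
      frobSq (P - (ℜ C : Matrix ι ι ℂ)) + frobSq (Q - (ℑ C : Matrix ι ι ℂ)) := by
  conv_lhs => rw [← realPart_add_I_smul_imaginaryPart C]
  rw [← frobSq_add_I_smul (hP.sub (ℜ C).2) (hQ.sub (ℑ C).2), smul_sub]
  abel_nf

variable [DecidableEq ι]

lemma conjTranspose_mul_self_of_mem_unitaryGroup {U : Matrix ι ι ℂ} (hU : U ∈ unitaryGroup ι ℂ) :
    Uᴴ * U = 1 :=
  Unitary.star_mul_self_of_mem hU

lemma mul_conjTranspose_self_of_mem_unitaryGroup {U : Matrix ι ι ℂ} (hU : U ∈ unitaryGroup ι ℂ) :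
    U * Uᴴ = 1 :=
  Unitary.mul_star_self_of_mem hU

lemma conjTranspose_mem_unitaryGroup {U : Matrix ι ι ℂ} (hU : U ∈ unitaryGroup ι ℂ) :
    Uᴴ ∈ unitaryGroup ι ℂ :=
  Unitary.star_mem hU

lemma eq_conjTranspose_mul_mul_of_mul_mul_conjTranspose_eq {U A D : Matrix ι ι ℂ}
    (hU : U ∈ unitaryGroup ι ℂ) (h : U * A * Uᴴ = D) : A = Uᴴ * D * U := by
  rw [← h, ← Matrix.mul_assoc, ← Matrix.mul_assoc, conjTranspose_mul_self_of_mem_unitaryGroup hU,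
    Matrix.one_mul, Matrix.mul_assoc, conjTranspose_mul_self_of_mem_unitaryGroup hU, Matrix.mul_one]

lemma frobSq_mul_unitary (P : Matrix ι ι ℂ) {U : Matrix ι ι ℂ} (hU : U ∈ unitaryGroup ι ℂ) :
    frobSq (P * U) = frobSq P := by
  rw [frobSq, conjTranspose_mul, trace_mul_cycle, Matrix.mul_assoc P,
    mul_conjTranspose_self_of_mem_unitaryGroup hU, Matrix.mul_one, trace_mul_comm, frobSq]

lemma frobSq_unitary_mul (P : Matrix ι ι ℂ) {U : Matrix ι ι ℂ} (hU : U ∈ unitaryGroup ι ℂ) :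
    frobSq (U * P) = frobSq P := by
  rw [frobSq, conjTranspose_mul, Matrix.mul_assoc, ← Matrix.mul_assoc Uᴴ,
    conjTranspose_mul_self_of_mem_unitaryGroup hU, Matrix.one_mul, frobSq]

lemma frobSq_unitary_conj (P : Matrix ι ι ℂ) {U : Matrix ι ι ℂ} (hU : U ∈ unitaryGroup ι ℂ) :
    frobSq (U * P * Uᴴ) = frobSq P := by
  rw [frobSq_mul_unitary _ (conjTranspose_mem_unitaryGroup hU), frobSq_unitary_mul _ hU]

lemma frobSq_conjTranspose_unitary_conj (P : Matrix ι ι ℂ) {U : Matrix ι ι ℂ}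
    (hU : U ∈ unitaryGroup ι ℂ) : frobSq (Uᴴ * P * U) = frobSq P := by
  simpa using frobSq_unitary_conj P (conjTranspose_mem_unitaryGroup hU)

lemma frobSq_diagonal (v : ι → ℝ) : frobSq (diagonal fun i => (v i : ℂ)) = ∑ i, v i ^ 2 := by
  simp [frobSq, diagonal_mul_diagonal, trace_diagonal, sq]

lemma normSq_mem_doublyStochastic {M : Matrix ι ι ℂ} (hM : M ∈ unitaryGroup ι ℂ) :
    (of fun i j => Complex.normSq (M i j)) ∈ doublyStochastic ℝ ι := by
  refine mem_doublyStochastic_iff_sum.2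
    ⟨fun _ _ => Complex.normSq_nonneg _, fun i => ?_, fun j => ?_⟩
  · have := congrArg (fun X => X i i) (mul_conjTranspose_self_of_mem_unitaryGroup hM)
    simp only [mul_apply, conjTranspose_apply, one_apply_eq, Complex.star_def,
      Complex.mul_conj] at this
    exact_mod_cast this
  · have := congrArg (fun X => X j j) (conjTranspose_mul_self_of_mem_unitaryGroup hM)
    simp only [mul_apply, conjTranspose_apply, one_apply_eq, Complex.star_def,
      ← Complex.normSq_eq_conj_mul_self] at this
    exact_mod_cast this

lemma dotProduct_mulVec_le_of_mem_doublyStochastic {a f : ι → ℝ} (haf : Monovary a f)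
    {S : Matrix ι ι ℝ} (hS : S ∈ doublyStochastic ℝ ι) :
    a ⬝ᵥ (S *ᵥ f) ≤ a ⬝ᵥ f := by
  let φ : Matrix ι ι ℝ →ₗ[ℝ] ℝ :=
    { toFun := fun S => a ⬝ᵥ (S *ᵥ f)
      map_add' := fun S T => by simp [add_mulVec, dotProduct_add]
      map_smul' := fun c S => by simp [smul_mulVec, dotProduct_smul] }
  rw [← SetLike.mem_coe, doublyStochastic_eq_convexHull_permMatrix] at hS
  obtain ⟨_, ⟨σ, rfl⟩, hσ⟩ :=
    (φ.convexOn convex_univ).exists_ge_of_mem_convexHull (Set.subset_univ _) hS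
  refine hσ.trans ?_
  simpa [φ, permMatrix_mulVec, dotProduct] using haf.sum_mul_comp_perm_le_sum_mul

lemma re_trace_conj_diagonal_mul_diagonal (M : Matrix ι ι ℂ) (a f : ι → ℝ) :
    (trace (Mᴴ * diagonal (fun i => (a i : ℂ)) * M * diagonal (fun i => (f i : ℂ)))).re =
      a ⬝ᵥ ((of fun i j => Complex.normSq (M i j)) *ᵥ f) := by
  simp only [trace, diag, mul_apply, diagonal_apply, mul_ite, mul_zero, Finset.sum_ite_eq',
    Finset.mem_univ, if_true, conjTranspose_apply, Finset.sum_mul, Complex.re_sum, dotProduct,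
    mulVec, of_apply, Finset.mul_sum]
  rw [Finset.sum_comm]
  refine Finset.sum_congr rfl fun i _ => Finset.sum_congr rfl fun j _ => ?_
  rw [Complex.normSq_apply]
  simp [Complex.mul_re, Complex.mul_im]
  ring

lemma re_trace_conj_diagonal_mul_diagonal_le {M : Matrix ι ι ℂ} (hM : M ∈ unitaryGroup ι ℂ)
    {a f : ι → ℝ} (haf : Monovary a f) :
    (trace (Mᴴ * diagonal (fun i => (a i : ℂ)) * M * diagonal (fun i => (f i : ℂ)))).re ≤
      a ⬝ᵥ f := by
  rw [re_trace_conj_diagonal_mul_diagonal]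
  exact dotProduct_mulVec_le_of_mem_doublyStochastic haf (normSq_mem_doublyStochastic hM)

lemma sum_sq_sub_le_frobSq_conj_diagonal_sub {M : Matrix ι ι ℂ} (hM : M ∈ unitaryGroup ι ℂ)
    {a f : ι → ℝ} (haf : Monovary a f) :
    ∑ i, (a i - f i) ^ 2 ≤
      frobSq (Mᴴ * diagonal (fun i => (a i : ℂ)) * M - diagonal (fun i => (f i : ℂ))) := by
  have hsum : ∑ i, (a i - f i) ^ 2 = ∑ i, a i ^ 2 + ∑ i, f i ^ 2 - 2 * a ⬝ᵥ f := by
    simp only [dotProduct, Finset.mul_sum, ← Finset.sum_add_distrib, ← Finset.sum_sub_distrib]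
    exact Finset.sum_congr rfl fun i _ => by ring
  rw [frobSq_sub, (isHermitian_conjTranspose_mul_diagonal_mul M a).eq,
    frobSq_conjTranspose_unitary_conj _ hM, frobSq_diagonal, frobSq_diagonal, hsum]
  linarith [re_trace_conj_diagonal_mul_diagonal_le hM haf]

lemma sum_sq_sub_le_frobSq_conj_sub_conj {W X U : Matrix ι ι ℂ} (hW : W ∈ unitaryGroup ι ℂ)
    (hX : X ∈ unitaryGroup ι ℂ) (hU : U ∈ unitaryGroup ι ℂ) {a f : ι → ℝ} (haf : Monovary a f) :
    ∑ i, (a i - f i) ^ 2 ≤ frobSq (Xᴴ * (Wᴴ * diagonal (fun i => (a i : ℂ)) * W) * X -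
      Uᴴ * diagonal (fun i => (f i : ℂ)) * U) := by
  have hconj : U * (Xᴴ * (Wᴴ * diagonal (fun i => (a i : ℂ)) * W) * X -
      Uᴴ * diagonal (fun i => (f i : ℂ)) * U) * Uᴴ =
      (W * X * Uᴴ)ᴴ * diagonal (fun i => (a i : ℂ)) * (W * X * Uᴴ) -
        diagonal (fun i => (f i : ℂ)) := by
    rw [mul_sub, sub_mul]
    congr 1
    · simp only [conjTranspose_mul, conjTranspose_conjTranspose, Matrix.mul_assoc]
    · rw [← Matrix.mul_assoc, ← Matrix.mul_assoc, mul_conjTranspose_self_of_mem_unitaryGroup hU,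
        Matrix.one_mul, Matrix.mul_assoc, mul_conjTranspose_self_of_mem_unitaryGroup hU,
        Matrix.mul_one]
  rw [← frobSq_unitary_conj _ hU, hconj]
  exact sum_sq_sub_le_frobSq_conj_diagonal_sub
    (mul_mem (mul_mem hW hX) (conjTranspose_mem_unitaryGroup hU)) haf

lemma frobSq_conj_diagonal_sub_conj_diagonal {U : Matrix ι ι ℂ} (hU : U ∈ unitaryGroup ι ℂ)
    (a f : ι → ℝ) :
    frobSq (Uᴴ * diagonal (fun i => (a i : ℂ)) * U - Uᴴ * diagonal (fun i => (f i : ℂ)) * U) =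
      ∑ i, (a i - f i) ^ 2 := by
  rw [← sub_mul, ← mul_sub, frobSq_conjTranspose_unitary_conj _ hU, diagonal_sub]
  exact_mod_cast frobSq_diagonal (fun i => a i - f i)

lemma isHermitian_of_mul_mul_conjTranspose_eq_diagonal {W A : Matrix ι ι ℂ}
    (hW : W ∈ unitaryGroup ι ℂ) {a : ι → ℝ} (hWA : W * A * Wᴴ = diagonal (fun i => (a i : ℂ))) :
    A.IsHermitian := by
  rw [eq_conjTranspose_mul_mul_of_mul_mul_conjTranspose_eq hW hWA]
  exact isHermitian_conjTranspose_mul_diagonal_mul W a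

theorem frobSq_conj_diagonal_sub_le {W A U H X : Matrix ι ι ℂ} {a f : ι → ℝ}
    (hW : W ∈ unitaryGroup ι ℂ) (hWA : W * A * Wᴴ = diagonal (fun i => (a i : ℂ)))
    (hU : U ∈ unitaryGroup ι ℂ) (hUH : U * H * Uᴴ = diagonal (fun i => (f i : ℂ)))
    (hX : X ∈ unitaryGroup ι ℂ) (haf : Monovary a f) :
    frobSq (Uᴴ * diagonal (fun i => (a i : ℂ)) * U - H) ≤ frobSq (Xᴴ * A * X - H) := by
  rw [eq_conjTranspose_mul_mul_of_mul_mul_conjTranspose_eq hW hWA,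
    eq_conjTranspose_mul_mul_of_mul_mul_conjTranspose_eq hU hUH,
    frobSq_conj_diagonal_sub_conj_diagonal hU]
  exact sum_sq_sub_le_frobSq_conj_sub_conj hW hX hU haf

end

theorem stmt1_general {n : ℕ} (A B C : Matrix (Fin n) (Fin n) ℂ)
    (f g a b : Fin n → ℝ)
    (hf : Antitone f) (hg : Antitone g) (ha : Antitone a) (hb : Antitone b)
    (U V : Matrix (Fin n) (Fin n) ℂ)
    (hU : U ∈ Matrix.unitaryGroup (Fin n) ℂ) (hV : V ∈ Matrix.unitaryGroup (Fin n) ℂ)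
    (hUF : U * ((1 / 2 : ℂ) • (C + Cᴴ)) * Uᴴ = Matrix.diagonal (fun i => (f i : ℂ)))
    (hVG : V * ((-Complex.I / 2 : ℂ) • (C - Cᴴ)) * Vᴴ = Matrix.diagonal (fun i => (g i : ℂ)))
    (haA : ∃ W ∈ Matrix.unitaryGroup (Fin n) ℂ,
      W * A * Wᴴ = Matrix.diagonal (fun i => (a i : ℂ)))
    (hbB : ∃ W ∈ Matrix.unitaryGroup (Fin n) ℂ,
      W * ((-Complex.I) • B) * Wᴴ = Matrix.diagonal (fun i => (b i : ℂ))) :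
    ∀ X ∈ Matrix.unitaryGroup (Fin n) ℂ, ∀ Y ∈ Matrix.unitaryGroup (Fin n) ℂ,
      frob (Uᴴ * Matrix.diagonal (fun i => (a i : ℂ)) * U +
          Vᴴ * (Complex.I • Matrix.diagonal (fun i => (b i : ℂ))) * V - C) ≤
        frob (Xᴴ * A * X + Yᴴ * B * Y - C) := by
  intro X hX Y hY
  obtain ⟨W, hW, hWA⟩ := haA
  obtain ⟨W', hW', hW'B⟩ := hbB
  rw [← realPart_eq_half_smul_add_conjTranspose] at hUF
  rw [← imaginaryPart_eq_smul_sub_conjTranspose] at hVG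
  have hA := isHermitian_of_mul_mul_conjTranspose_eq_diagonal hW hWA
  have hB := isHermitian_of_mul_mul_conjTranspose_eq_diagonal hW' hW'B
  have hYBY : Yᴴ * B * Y = Complex.I • (Yᴴ * ((-Complex.I) • B) * Y) := by
    simp only [mul_smul_comm, smul_mul_assoc, smul_smul, mul_neg, Complex.I_mul_I, neg_neg,
      one_smul]
  refine Real.sqrt_le_sqrt ?_
  calc frobSq (Uᴴ * diagonal (fun i => (a i : ℂ)) * U +
          Vᴴ * (Complex.I • diagonal (fun i => (b i : ℂ))) * V - C)
      = frobSq (Uᴴ * diagonal (fun i => (a i : ℂ)) * U - (ℜ C : Matrix (Fin n) (Fin n) ℂ)) +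
          frobSq (Vᴴ * diagonal (fun i => (b i : ℂ)) * V - (ℑ C : Matrix (Fin n) (Fin n) ℂ)) := by
        rw [mul_smul_comm, smul_mul_assoc]
        exact frobSq_add_I_smul_sub (isHermitian_conjTranspose_mul_diagonal_mul U a)
          (isHermitian_conjTranspose_mul_diagonal_mul V b) C
    _ ≤ frobSq (Xᴴ * A * X - (ℜ C : Matrix (Fin n) (Fin n) ℂ)) +
          frobSq (Yᴴ * ((-Complex.I) • B) * Y - (ℑ C : Matrix (Fin n) (Fin n) ℂ)) :=
        add_le_add (frobSq_conj_diagonal_sub_le hW hWA hU hUF hX (ha.monovary hf))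
          (frobSq_conj_diagonal_sub_le hW' hW'B hV hVG hY (hb.monovary hg))
    _ = frobSq (Xᴴ * A * X + Yᴴ * B * Y - C) := by
        rw [hYBY, frobSq_add_I_smul_sub (isHermitian_conjTranspose_mul_mul X hA)
          (isHermitian_conjTranspose_mul_mul Y hB)]

theorem stmt1 {n : ℕ} (A B C : Matrix (Fin n) (Fin n) ℂ)
    (hA : A.IsHermitian) (hB : Bᴴ = -B)
    (f g a b : Fin n → ℝ)
    (hf : Antitone f) (hg : Antitone g) (ha : Antitone a) (hb : Antitone b)
    (U V : Matrix (Fin n) (Fin n) ℂ)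
    (hU : U ∈ Matrix.unitaryGroup (Fin n) ℂ) (hV : V ∈ Matrix.unitaryGroup (Fin n) ℂ)
    (hUF : U * ((1 / 2 : ℂ) • (C + Cᴴ)) * Uᴴ = Matrix.diagonal (fun i => (f i : ℂ)))
    (hVG : V * ((-Complex.I / 2 : ℂ) • (C - Cᴴ)) * Vᴴ = Matrix.diagonal (fun i => (g i : ℂ)))
    (haA : ∃ W ∈ Matrix.unitaryGroup (Fin n) ℂ,
      W * A * Wᴴ = Matrix.diagonal (fun i => (a i : ℂ)))
    (hbB : ∃ W ∈ Matrix.unitaryGroup (Fin n) ℂ,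
      W * ((-Complex.I) • B) * Wᴴ = Matrix.diagonal (fun i => (b i : ℂ))) :
    ∀ X ∈ Matrix.unitaryGroup (Fin n) ℂ, ∀ Y ∈ Matrix.unitaryGroup (Fin n) ℂ,
      frob (Uᴴ * Matrix.diagonal (fun i => (a i : ℂ)) * U +
          Vᴴ * (Complex.I • Matrix.diagonal (fun i => (b i : ℂ))) * V - C) ≤
        frob (Xᴴ * A * X + Yᴴ * B * Y - C) :=
  stmt1_general A B C f g a b hf hg ha hb U V hU hV hUF hVG haA hbB
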